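/- arXiv:math/0407466 — 2 statements merged into one kernel-verified Lean document; each statement's English description precedes it below -/
import Mathlib

section
/- Let f_N be a Beurling function with ∑_{k=1}^N a_k θ_k = 0, and F_N = f_N + 1. Then for every integer l ≥ 1, ∑_{k=1}^N a_k θ_k^{2l} = (1/ζ(2l)) (1 − 2l · M_{F_N}(2l)), where M_{F_N}(s) = ∫₀¹ F_N(x) x^{s−1} dx. -/
/-!
For `0 ≤ θ ≤ 1` write `{θ/x} = θ/x - ⌊θ/x⌋` and count `⌊θ/x⌋` as the number of `n ≥ 1` with
`x ≤ θ/n`; integrating term by term gives `∫₀¹ {θ/x} x^(s-1) dx = θ/(s-1) - θ^s ζ(s)/s`.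
Summed against the `a_k`, the terms `θ_k/(s-1)` cancel because `∑ a_k θ_k = 0`, so
`s · M_{F_N}(s) = 1 - ζ(s) ∑ a_k θ_k^s`.
-/

open MeasureTheory Finset

theorem natFloor_div_mul_pow_eq_tsum_indicator (θ : ℝ) {x : ℝ} (hx : 0 < x) (m : ℕ) :
    (⌊θ / x⌋₊ : ℝ) * x ^ m = ∑' n : ℕ, (Set.Ioc 0 (θ / (n + 1))).indicator (· ^ m) x := by
  have hmem (n : ℕ) : x ∈ Set.Ioc 0 (θ / (n + 1)) ↔ n < ⌊θ / x⌋₊ := by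
    rw [Nat.lt_iff_add_one_le, Nat.le_floor_iff' n.succ_ne_zero, Set.mem_Ioc,
      le_div_iff₀ hx, le_div_iff₀ (by positivity), mul_comm]
    push_cast
    exact and_iff_right hx
  simp only [Set.indicator_apply, hmem]
  rw [tsum_eq_sum (s := range ⌊θ / x⌋₊) (fun n hn => if_neg (by simpa using hn)),
    sum_ite_of_true (fun n hn => mem_range.1 hn), sum_const, card_range, nsmul_eq_mul]

theorem integral_indicator_Ioc_pow {c : ℝ} (hc0 : 0 ≤ c) (hc1 : c ≤ 1) (m : ℕ) :
    ∫ x in Set.Ioc (0 : ℝ) 1, (Set.Ioc 0 c).indicator (· ^ m) x = c ^ (m + 1) / (m + 1) := by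
  rw [integral_indicator measurableSet_Ioc, Measure.restrict_restrict measurableSet_Ioc,
    Set.inter_eq_left.2 (Set.Ioc_subset_Ioc le_rfl hc1), ← intervalIntegral.integral_of_le hc0,
    integral_pow]
  simp

theorem summable_one_div_nat_add_one_pow {k : ℕ} (hk : 1 < k) :
    Summable fun n : ℕ => 1 / ((n : ℝ) + 1) ^ k := by
  exact_mod_cast (summable_nat_add_iff 1).2 (Real.summable_one_div_nat_pow.2 hk)

theorem ofReal_tsum_one_div_nat_add_one_pow {k : ℕ} (hk : 1 < k) :
    ((∑' n : ℕ, 1 / ((n : ℝ) + 1) ^ k : ℝ) : ℂ) = riemannZeta k := by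
  rw [zeta_eq_tsum_one_div_nat_add_one_cpow (by simpa using hk), Complex.ofReal_tsum]
  push_cast
  simp only [Complex.cpow_natCast]

theorem integral_natFloor_div_mul_pow {θ : ℝ} (hθ0 : 0 ≤ θ) (hθ1 : θ ≤ 1) {m : ℕ} (hm : 0 < m) :
    ∫ x in Set.Ioc (0 : ℝ) 1, (⌊θ / x⌋₊ : ℝ) * x ^ m
      = θ ^ (m + 1) * (∑' n : ℕ, 1 / ((n : ℝ) + 1) ^ (m + 1)) / (m + 1) := by
  have hc (n : ℕ) : 0 ≤ θ / (n + 1) ∧ θ / (n + 1) ≤ 1 :=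
    ⟨by positivity, div_le_one_of_le₀ (by linarith [n.cast_nonneg (α := ℝ)]) (by positivity)⟩
  have hterm (n : ℕ) : (θ / (n + 1)) ^ (m + 1) / (m + 1)
      = θ ^ (m + 1) / (m + 1) * (1 / ((n : ℝ) + 1) ^ (m + 1)) := by
    rw [div_pow]; field_simp
  have hint (n : ℕ) : Integrable ((Set.Ioc 0 (θ / (n + 1))).indicator (· ^ m))
      (volume.restrict (Set.Ioc (0 : ℝ) 1)) := by
    refine (integrable_indicator_iff measurableSet_Ioc).2 ?_
    have := intervalIntegral.intervalIntegrable_pow (μ := volume) m (a := 0) (b := θ / (n + 1))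
    rw [intervalIntegrable_iff_integrableOn_Ioc_of_le (hc n).1] at this
    exact this.restrict
  have hval (n : ℕ) := integral_indicator_Ioc_pow (hc n).1 (hc n).2 m
  calc ∫ x in Set.Ioc (0 : ℝ) 1, (⌊θ / x⌋₊ : ℝ) * x ^ m
      = ∫ x in Set.Ioc (0 : ℝ) 1, ∑' n : ℕ, (Set.Ioc 0 (θ / (n + 1))).indicator (· ^ m) x :=
        setIntegral_congr_fun measurableSet_Ioc
          fun x hx => natFloor_div_mul_pow_eq_tsum_indicator θ hx.1 m
    _ = ∑' n : ℕ, (θ / (n + 1)) ^ (m + 1) / (m + 1) := by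
        rw [← integral_tsum_of_summable_integral_norm hint]
        · exact tsum_congr hval
        · refine ((summable_one_div_nat_add_one_pow (by omega : 1 < m + 1)).mul_left
            (θ ^ (m + 1) / (m + 1))).congr fun n => ?_
          rw [← hterm, ← hval n]
          refine integral_congr_ae (ae_of_all _ fun x => ?_)
          exact (Real.norm_of_nonneg
            (Set.indicator_nonneg (fun y (hy : y ∈ Set.Ioc _ _) => pow_nonneg hy.1.le m) x)).symm
    _ = _ := by
        rw [tsum_congr hterm, tsum_mul_left]; ring

theorem integrableOn_fract_div_mul_pow (θ : ℝ) (m : ℕ) :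
    IntegrableOn (fun x : ℝ => Int.fract (θ / x) * x ^ m) (Set.Ioc 0 1) := by
  refine Measure.integrableOn_of_bounded (M := 1) (by simp)
    (((measurable_const.div measurable_id).fract).mul
      (measurable_id.pow_const m)).aestronglyMeasurable
    ((ae_restrict_iff' measurableSet_Ioc).2 (ae_of_all _ fun x hx => ?_))
  have hfract : ‖Int.fract (θ / x)‖ ≤ 1 := by
    rw [Real.norm_of_nonneg (Int.fract_nonneg _)]
    exact (Int.fract_lt_one _).le
  have hxm : ‖x ^ m‖ ≤ 1 := by
    rw [Real.norm_of_nonneg (pow_nonneg hx.1.le m)]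
    exact pow_le_one₀ hx.1.le hx.2
  simpa only [norm_mul, one_mul] using mul_le_mul hfract hxm (norm_nonneg _) zero_le_one

theorem fract_div_mul_pow_succ {θ x : ℝ} (hθ : 0 ≤ θ) (hx : 0 < x) (m : ℕ) :
    Int.fract (θ / x) * x ^ (m + 1) = θ * x ^ m - (⌊θ / x⌋₊ : ℝ) * x ^ (m + 1) := by
  rw [Int.fract, ← natCast_floor_eq_intCast_floor (div_nonneg hθ hx.le)]
  field_simp
  ring

theorem integral_fract_div_mul_pow {θ : ℝ} (hθ0 : 0 ≤ θ) (hθ1 : θ ≤ 1) {k : ℕ} (hk : 2 ≤ k) :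
    ∫ x in (0 : ℝ)..1, Int.fract (θ / x) * x ^ (k - 1)
      = θ / (k - 1) - θ ^ k * (∑' n : ℕ, 1 / ((n : ℝ) + 1) ^ k) / k := by
  obtain ⟨m, rfl⟩ : ∃ m, k = m + 2 := ⟨k - 2, by omega⟩
  have hpow : IntegrableOn (fun x : ℝ => θ * x ^ m) (Set.Ioc 0 1) :=
    (intervalIntegral.intervalIntegrable_pow m).1.const_mul θ
  have hfloor : IntegrableOn (fun x : ℝ => (⌊θ / x⌋₊ : ℝ) * x ^ (m + 1)) (Set.Ioc 0 1) :=
    (hpow.sub (integrableOn_fract_div_mul_pow θ (m + 1))).congr_fun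
      (fun x hx => by simp [fract_div_mul_pow_succ hθ0 hx.1]) measurableSet_Ioc
  rw [show m + 2 - 1 = m + 1 by omega, intervalIntegral.integral_of_le zero_le_one,
    setIntegral_congr_fun measurableSet_Ioc fun x hx => fract_div_mul_pow_succ hθ0 hx.1 m,
    integral_sub hpow hfloor, integral_const_mul, ← intervalIntegral.integral_of_le zero_le_one,
    integral_pow, integral_natFloor_div_mul_pow hθ0 hθ1 (by omega : 0 < m + 1)]
  push_cast
  ring

theorem ofReal_integral_fract_div_mul_pow {θ : ℝ} (hθ0 : 0 ≤ θ) (hθ1 : θ ≤ 1) {k : ℕ}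
    (hk : 2 ≤ k) :
    ((∫ x in (0 : ℝ)..1, Int.fract (θ / x) * x ^ (k - 1) : ℝ) : ℂ)
      = θ / (k - 1) - θ ^ k * riemannZeta k / k := by
  rw [integral_fract_div_mul_pow hθ0 hθ1 hk, ← ofReal_tsum_one_div_nat_add_one_pow hk]
  norm_cast

theorem integral_sum_mul_fract_add_one_mul_pow {ι : Type*} (s : Finset ι) (a : ι → ℂ)
    (θ : ι → ℝ) (m : ℕ) :
    ∫ x in (0 : ℝ)..1, ((∑ k ∈ s, a k * ((Int.fract (θ k / x) : ℝ) : ℂ)) + 1) * (x : ℂ) ^ m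
      = ∑ k ∈ s, a k * ((∫ x in (0 : ℝ)..1, Int.fract (θ k / x) * x ^ m : ℝ) : ℂ)
        + 1 / (m + 1) := by
  have hfract (k : ι) : IntervalIntegrable
      (fun x : ℝ => a k * ((Int.fract (θ k / x) * x ^ m : ℝ) : ℂ)) volume 0 1 := by
    have h := (intervalIntegrable_iff_integrableOn_Ioc_of_le zero_le_one).2
      (integrableOn_fract_div_mul_pow (θ k) m)
    exact IntervalIntegrable.const_mul ⟨h.1.ofReal, h.2.ofReal⟩ (a k)
  have hsum : IntervalIntegrable
      (fun x : ℝ => ∑ k ∈ s, a k * ((Int.fract (θ k / x) * x ^ m : ℝ) : ℂ)) volume 0 1 := by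
    simpa only [Finset.sum_fn] using IntervalIntegrable.sum s fun k _ => hfract k
  have hpow : IntervalIntegrable (fun x : ℝ => ((x ^ m : ℝ) : ℂ)) volume 0 1 :=
    ⟨(intervalIntegral.intervalIntegrable_pow m).1.ofReal,
      (intervalIntegral.intervalIntegrable_pow m).2.ofReal⟩
  calc ∫ x in (0 : ℝ)..1, ((∑ k ∈ s, a k * ((Int.fract (θ k / x) : ℝ) : ℂ)) + 1) * (x : ℂ) ^ m
      = ∫ x in (0 : ℝ)..1,
          (∑ k ∈ s, a k * ((Int.fract (θ k / x) * x ^ m : ℝ) : ℂ)) + ((x ^ m : ℝ) : ℂ) := by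
        congr 1; ext x
        push_cast
        rw [add_mul, one_mul, sum_mul]
        simp only [mul_assoc]
    _ = _ := by
        rw [intervalIntegral.integral_add hsum hpow, intervalIntegral.integral_finsetSum
          fun k _ => hfract k, intervalIntegral.integral_ofReal, integral_pow]
        simp only [intervalIntegral.integral_const_mul, intervalIntegral.integral_ofReal]
        push_cast
        ring

theorem integral_sum_mul_fract_add_one_mul_pow_sub_one {ι : Type*} (s : Finset ι) (a : ι → ℂ)
    {θ : ι → ℝ} (hθ : ∀ k ∈ s, 0 ≤ θ k ∧ θ k ≤ 1) {n : ℕ} (hn : 2 ≤ n) :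
    ∫ x in (0 : ℝ)..1, ((∑ k ∈ s, a k * ((Int.fract (θ k / x) : ℝ) : ℂ)) + 1) * (x : ℂ) ^ (n - 1)
      = ∑ k ∈ s, a k * (θ k / (n - 1) - θ k ^ n * riemannZeta n / n) + 1 / n := by
  rw [integral_sum_mul_fract_add_one_mul_pow, Nat.cast_sub (by omega), Nat.cast_one,
    sub_add_cancel]
  congr 1
  exact sum_congr rfl fun k hk => by
    rw [ofReal_integral_fract_div_mul_pow (hθ k hk).1 (hθ k hk).2 hn]

/-- ∑_k a_k θ_k^{2l} = (1/ζ(2l)) (1 - 2l · M_{F_N}(2l)). -/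
theorem sum_theta_pow_eq_mellin (N : ℕ) (a : ℕ → ℂ) (θ : ℕ → ℝ)
    (hθ : ∀ k ∈ Finset.Icc 1 N, 0 < θ k ∧ θ k ≤ 1)
    (hsum : ∑ k ∈ Finset.Icc 1 N, a k * (θ k : ℂ) = 0)
    (l : ℕ) (hl : 1 ≤ l) :
    ∑ k ∈ Finset.Icc 1 N, a k * ((θ k : ℂ)) ^ (2 * l)
      = (1 / riemannZeta (2 * l)) *
        (1 - (2 * l : ℂ) *
          ∫ x in (0:ℝ)..1,
            ((∑ k ∈ Finset.Icc 1 N, a k * ((Int.fract (θ k / x) : ℝ) : ℂ)) + 1)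
              * (x : ℂ) ^ (2 * l - 1)) := by
  have hk : 2 ≤ 2 * l := by omega
  have hζ : riemannZeta (2 * l) ≠ 0 := riemannZeta_ne_zero_of_one_lt_re (by exact_mod_cast hk)
  have hM := integral_sum_mul_fract_add_one_mul_pow_sub_one (Icc 1 N) a
    (fun k hk => ⟨(hθ k hk).1.le, (hθ k hk).2⟩) hk
  push_cast at hM
  have hlin : ∑ k ∈ Icc 1 N,
        a k * (θ k / (2 * l - 1) - θ k ^ (2 * l) * riemannZeta (2 * l) / (2 * l))
      = 1 / (2 * l - 1) * ∑ k ∈ Icc 1 N, a k * (θ k : ℂ)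
        - riemannZeta (2 * l) / (2 * l) * ∑ k ∈ Icc 1 N, a k * (θ k : ℂ) ^ (2 * l) := by
    rw [mul_sum, mul_sum, ← sum_sub_distrib]
    exact sum_congr rfl fun k _ => by ring
  have hl0 : (l : ℂ) ≠ 0 := by norm_cast; omega
  rw [hM, hlin, hsum]
  field_simp
  ring
end

section
/- For θ ∈ (0, 1] and n ∈ ℕ, n ≥ 1, the integral ∫₀¹ ρ(θ/x) sin(nπx) dx equals θ ∫₀¹ (sin(nπx)/x) dx − (1/(nπ)) ∑_{j=1}^∞ j [cos(nπθ/(j+1)) − cos(nπθ/j)], where the series converges. -/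
open MeasureTheory Real

set_option maxHeartbeats 1000000 in
/-- ∫₀¹ ρ(θ/x) sin(nπx) dx = θ ∫₀¹ sin(nπx)/x dx
      - (1/(nπ)) ∑_{j≥1} j [cos(nπθ/(j+1)) - cos(nπθ/j)]. -/
theorem fract_sin_integral (θ : ℝ) (hθ0 : 0 < θ) (hθ1 : θ ≤ 1) (n : ℕ) (hn : 1 ≤ n) :
    ∃ S : ℝ,
      HasSum (fun j : ℕ => ((j : ℝ) + 1) *
          (Real.cos ((n : ℝ) * Real.pi * θ / ((j : ℝ) + 2))
            - Real.cos ((n : ℝ) * Real.pi * θ / ((j : ℝ) + 1)))) S ∧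
      (∫ x in (0:ℝ)..1, Int.fract (θ / x) * Real.sin ((n : ℝ) * Real.pi * x))
        = θ * (∫ x in (0:ℝ)..1, Real.sin ((n : ℝ) * Real.pi * x) / x)
          - (1 / ((n : ℝ) * Real.pi)) * S := by
  have hnpos : (0:ℝ) < (n : ℝ) := by exact_mod_cast hn
  set a : ℝ := (n : ℝ) * Real.pi with ha_def
  have ha : 0 < a := mul_pos hnpos Real.pi_pos
  set b : ℝ := a * θ with hb_def
  have hb : 0 < b := mul_pos ha hθ0
  set t : ℕ → ℝ := fun j : ℕ => ((j : ℝ) + 1) *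
      (Real.cos (b / ((j : ℝ) + 2)) - Real.cos (b / ((j : ℝ) + 1))) with ht_def
  set g : ℝ → ℝ := fun x => ((⌊θ / x⌋ : ℤ) : ℝ) * Real.sin (a * x) with hg_def
  -- sin integral helper
  have hsin : ∀ c d : ℝ, (∫ x in c..d, Real.sin (a * x))
      = (Real.cos (a * c) - Real.cos (a * d)) / a := by
    intro c d
    rw [intervalIntegral.integral_comp_mul_left (fun y => Real.sin y) ha.ne',
      _root_.integral_sin, smul_eq_mul]
    field_simp
  -- measurability of g
  have hgm : Measurable g := by
    apply Measurable.mul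
    · exact measurable_from_top.comp ((measurable_const.div measurable_id).floor)
    · exact Real.measurable_sin.comp (measurable_id.const_mul a)
  -- bound for g on (0,1]
  have hgb : ∀ x ∈ Set.Ioc (0:ℝ) 1, ‖g x‖ ≤ b := by
    intro x hx
    have hx0 : 0 < x := hx.1
    have hfr0 : (0:ℝ) ≤ ((⌊θ / x⌋ : ℤ) : ℝ) := by
      have : (0:ℤ) ≤ ⌊θ / x⌋ := Int.floor_nonneg.2 (by positivity)
      exact_mod_cast this
    have hfr : ((⌊θ / x⌋ : ℤ) : ℝ) ≤ θ / x := Int.floor_le _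
    have hs : |Real.sin (a * x)| ≤ a * x :=
      Real.abs_sin_le_abs.trans (le_of_eq (abs_of_nonneg (by positivity)))
    have hnn : ‖g x‖ = |((⌊θ / x⌋ : ℤ) : ℝ)| * |Real.sin (a * x)| := by
      rw [hg_def]; exact abs_mul _ _
    rw [hnn, abs_of_nonneg hfr0]
    calc ((⌊θ / x⌋ : ℤ) : ℝ) * |Real.sin (a * x)| ≤ (θ / x) * (a * x) :=
          mul_le_mul hfr hs (abs_nonneg _) (by positivity)
      _ = b := by field_simp [hb_def]; ring
  -- integrability of g
  have hgint : IntervalIntegrable g volume 0 1 := by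
    rw [intervalIntegrable_iff_integrableOn_Ioc_of_le zero_le_one]
    apply Measure.integrableOn_of_bounded (M := b) measure_Ioc_lt_top.ne
      hgm.aestronglyMeasurable
    exact (ae_restrict_iff' measurableSet_Ioc).2 (Filter.Eventually.of_forall hgb)
  -- membership of θ/c in [0,1]
  have hmem : ∀ c : ℝ, 1 ≤ c → θ / c ∈ Set.uIcc (0:ℝ) 1 := by
    intro c hc
    rw [Set.uIcc_of_le zero_le_one]
    exact ⟨by positivity, le_trans (div_le_self hθ0.le hc) hθ1⟩
  have hsub : ∀ c d : ℝ, c ∈ Set.uIcc (0:ℝ) 1 → d ∈ Set.uIcc (0:ℝ) 1 →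
      IntervalIntegrable g volume c d :=
    fun c d hc hd => hgint.mono_set (Set.uIcc_subset_uIcc hc hd)
  -- integral over [θ,1] is zero
  have hF0 : (∫ x in θ..1, g x) = 0 := by
    rw [intervalIntegral.integral_of_le hθ1]
    have hz : ∀ x ∈ Set.Ioc θ 1, g x = (0:ℝ) := by
      intro x hx
      have hx0 : 0 < x := lt_trans hθ0 hx.1
      have hfl : ⌊θ / x⌋ = 0 := by
        rw [Int.floor_eq_zero_iff]
        exact ⟨by positivity, (div_lt_one hx0).2 hx.1⟩
      simp [hg_def, hfl]
    rw [setIntegral_congr_fun measurableSet_Ioc hz]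
    simp
  -- integral over a piece
  have hIj : ∀ j : ℕ, (∫ x in (θ/((j:ℝ)+2))..(θ/((j:ℝ)+1)), g x) = t j / a := by
    intro j
    have hj1 : (0:ℝ) < (j:ℝ) + 1 := by positivity
    have hj2 : (0:ℝ) < (j:ℝ) + 2 := by positivity
    have hle : θ/((j:ℝ)+2) ≤ θ/((j:ℝ)+1) :=
      div_le_div_of_nonneg_left hθ0.le hj1 (by linarith)
    have hcong : (∫ x in (θ/((j:ℝ)+2))..(θ/((j:ℝ)+1)), g x)
        = ∫ x in (θ/((j:ℝ)+2))..(θ/((j:ℝ)+1)), ((j:ℝ)+1) * Real.sin (a * x) := by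
      rw [intervalIntegral.integral_of_le hle, intervalIntegral.integral_of_le hle]
      apply setIntegral_congr_fun measurableSet_Ioc
      intro x hx
      have hx0 : 0 < x := lt_of_le_of_lt (by positivity) hx.1
      have hfl : ⌊θ / x⌋ = (j : ℤ) + 1 := by
        rw [Int.floor_eq_iff]
        constructor
        · rw [le_div_iff₀ hx0]
          have h2 := (le_div_iff₀ hj1).1 hx.2
          push_cast
          linarith
        · rw [div_lt_iff₀ hx0]
          have h1 := (div_lt_iff₀ hj2).1 hx.1
          push_cast
          linarith
      simp only [hg_def, hfl]
      push_cast
      ring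
    rw [hcong, intervalIntegral.integral_const_mul, hsin, ht_def]
    rw [← mul_div_assoc, ← mul_div_assoc, ← hb_def]
    rw [hb_def]; ring
  -- telescoping
  have hF : ∀ N : ℕ, (∫ x in (θ/((N:ℝ)+1))..1, g x)
      = (∑ j ∈ Finset.range N, t j) / a := by
    intro N
    induction N with
    | zero => simpa using hF0
    | succ N ih =>
      have key := intervalIntegral.integral_add_adjacent_intervals
        (hsub (θ/((N:ℝ)+2)) (θ/((N:ℝ)+1)) (hmem _ (by linarith [Nat.cast_nonneg (α := ℝ) N]))
          (hmem _ (by linarith [Nat.cast_nonneg (α := ℝ) N])))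
        (hsub (θ/((N:ℝ)+1)) 1 (hmem _ (by linarith [Nat.cast_nonneg (α := ℝ) N]))
          Set.right_mem_uIcc)
      have hcast : ((N+1 : ℕ) : ℝ) + 1 = (N:ℝ) + 2 := by push_cast; ring
      rw [hcast, ← key, ih, hIj N, Finset.sum_range_succ, ← add_div, add_comm]
  -- tail integral bound
  have hEb : ∀ N : ℕ, ‖∫ x in (0:ℝ)..(θ/((N:ℝ)+1)), g x‖ ≤ b * θ * (1/((N:ℝ)+1)) := by
    intro N
    have hN1 : (0:ℝ) < (N:ℝ) + 1 := by positivity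
    have hc0 : (0:ℝ) ≤ θ/((N:ℝ)+1) := by positivity
    have h := intervalIntegral.norm_integral_le_of_norm_le_const
      (a := (0:ℝ)) (b := θ/((N:ℝ)+1)) (C := b) (f := g) ?_
    · calc ‖∫ x in (0:ℝ)..(θ/((N:ℝ)+1)), g x‖ ≤ b * |θ/((N:ℝ)+1) - 0| := h
        _ = b * θ * (1/((N:ℝ)+1)) := by
            rw [sub_zero, abs_of_nonneg hc0]; ring
    · intro x hx
      rw [Set.uIoc_of_le hc0] at hx
      refine hgb x ⟨hx.1, le_trans hx.2 ?_⟩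
      exact le_trans (div_le_self hθ0.le (by linarith [Nat.cast_nonneg (α := ℝ) N])) hθ1
  -- the tail integrals tend to 0
  have htail : Filter.Tendsto (fun N : ℕ => ∫ x in (0:ℝ)..(θ/((N:ℝ)+1)), g x)
      Filter.atTop (nhds 0) := by
    apply squeeze_zero_norm hEb
    have h0 := tendsto_one_div_add_atTop_nhds_zero_nat.const_mul (b * θ)
    simpa using h0
  -- partial sums tend to a * ∫g
  have hsplit : ∀ N : ℕ, (∫ x in (θ/((N:ℝ)+1))..1, g x)
      = (∫ x in (0:ℝ)..1, g x) - ∫ x in (0:ℝ)..(θ/((N:ℝ)+1)), g x := by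
    intro N
    have key := intervalIntegral.integral_add_adjacent_intervals
      (hsub 0 (θ/((N:ℝ)+1)) Set.left_mem_uIcc (hmem _ (by linarith [Nat.cast_nonneg (α := ℝ) N])))
      (hsub (θ/((N:ℝ)+1)) 1 (hmem _ (by linarith [Nat.cast_nonneg (α := ℝ) N])) Set.right_mem_uIcc)
    linarith
  have hTa : Filter.Tendsto (fun N : ℕ => ∑ j ∈ Finset.range N, t j) Filter.atTop
      (nhds (a * ∫ x in (0:ℝ)..1, g x)) := by
    have heq : (fun N : ℕ => ∑ j ∈ Finset.range N, t j)
        = fun N : ℕ => a * ∫ x in (θ/((N:ℝ)+1))..1, g x := by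
      funext N
      rw [hF N]
      field_simp
    rw [heq]
    simp only [hsplit]
    have h5 : Filter.Tendsto
        (fun N : ℕ => (∫ x in (0:ℝ)..1, g x) - ∫ x in (0:ℝ)..(θ/((N:ℝ)+1)), g x)
        Filter.atTop (nhds ((∫ x in (0:ℝ)..1, g x) - 0)) :=
      tendsto_const_nhds.sub htail
    have h6 := h5.const_mul a
    simpa using h6
  -- summability
  have hsum : Summable t := by
    have hbase : Summable (fun j : ℕ => b^2 * (1/((j:ℝ)+1)^2)) := by
      apply Summable.mul_left
      have h2 : Summable (fun k : ℕ => 1/(k:ℝ)^2) :=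
        summable_one_div_nat_pow.2 one_lt_two
      have h3 := (summable_nat_add_iff 1).2 h2
      apply h3.congr
      intro j
      push_cast
      ring
    apply Summable.of_norm_bounded hbase
    intro j
    have hj1 : (0:ℝ) < (j:ℝ) + 1 := by positivity
    have hj2 : (0:ℝ) < (j:ℝ) + 2 := by positivity
    set u : ℝ := b / ((j:ℝ)+2) with hu_def
    set v : ℝ := b / ((j:ℝ)+1) with hv_def
    have hu0 : 0 < u := by positivity
    have hv0 : 0 < v := by positivity
    have huv : u ≤ v := div_le_div_of_nonneg_left hb.le hj1 (by linarith)
    have h1 : |Real.sin ((u+v)/2)| ≤ (u+v)/2 :=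
      Real.abs_sin_le_abs.trans (le_of_eq (abs_of_nonneg (by positivity)))
    have h2 : |Real.sin ((u-v)/2)| ≤ (v-u)/2 := by
      have h := Real.abs_sin_le_abs (x := (u-v)/2)
      have he : |(u-v)/2| = (v-u)/2 := by
        rw [abs_of_nonpos (show (u-v)/2 ≤ 0 by linarith)]
        ring
      rw [he] at h
      exact h
    have hcc : |Real.cos u - Real.cos v| ≤ (u+v) * (v-u) / 2 := by
      rw [Real.cos_sub_cos, abs_mul, abs_mul]
      have habs2 : |(-2 : ℝ)| = 2 := by norm_num
      rw [habs2]
      nlinarith [abs_nonneg (Real.sin ((u+v)/2)), abs_nonneg (Real.sin ((u-v)/2))]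
    have hnorm : ‖t j‖ = ((j:ℝ)+1) * |Real.cos u - Real.cos v| := by
      simp only [ht_def, ← hu_def, ← hv_def, Real.norm_eq_abs]
      rw [abs_mul, abs_of_nonneg hj1.le]
    rw [hnorm]
    have step1 : ((j:ℝ)+1) * |Real.cos u - Real.cos v|
        ≤ ((j:ℝ)+1) * ((u+v) * (v-u) / 2) :=
      mul_le_mul_of_nonneg_left hcc hj1.le
    refine le_trans step1 ?_
    have he : ((j:ℝ)+1) * ((u+v) * (v-u) / 2)
        = b^2 * (2*((j:ℝ)+1)+1) / (2*((j:ℝ)+1)*(((j:ℝ)+1)+1)^2) := by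
      rw [hu_def, hv_def]
      field_simp
      ring
    rw [he, mul_one_div, div_le_div_iff₀ (by positivity) (by positivity)]
    nlinarith [sq_nonneg b, mul_nonneg (sq_nonneg b)
      (show (0:ℝ) ≤ 3*((j:ℝ)+1)^2 + 2*((j:ℝ)+1) by positivity)]
  -- conclude
  have hS : HasSum t (a * ∫ x in (0:ℝ)..1, g x) := by
    have huniq : (∑' j, t j) = a * ∫ x in (0:ℝ)..1, g x :=
      tendsto_nhds_unique hsum.hasSum.tendsto_sum_nat hTa
    have h := hsum.hasSum
    rwa [huniq] at h
  refine ⟨a * ∫ x in (0:ℝ)..1, g x, hS, ?_⟩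
  -- integrability of sin(ax)/x
  have h1m : Measurable (fun x : ℝ => Real.sin (a*x)/x) :=
    (Real.measurable_sin.comp (measurable_id.const_mul a)).div measurable_id
  have h1b : ∀ x ∈ Set.Ioc (0:ℝ) 1, ‖Real.sin (a*x)/x‖ ≤ a := by
    intro x hx
    have hx0 : 0 < x := hx.1
    have hs : |Real.sin (a * x)| ≤ a * x :=
      Real.abs_sin_le_abs.trans (le_of_eq (abs_of_nonneg (by positivity)))
    rw [norm_div, Real.norm_eq_abs, Real.norm_eq_abs, abs_of_nonneg hx0.le,
      div_le_iff₀ hx0]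
    linarith
  have h1int : IntervalIntegrable (fun x : ℝ => Real.sin (a*x)/x) volume 0 1 := by
    rw [intervalIntegrable_iff_integrableOn_Ioc_of_le zero_le_one]
    apply Measure.integrableOn_of_bounded (M := a) measure_Ioc_lt_top.ne
      h1m.aestronglyMeasurable
    exact (ae_restrict_iff' measurableSet_Ioc).2 (Filter.Eventually.of_forall h1b)
  have hpt : ∀ x : ℝ, Int.fract (θ/x) * Real.sin (a*x)
      = θ * (Real.sin (a*x)/x) - g x := by
    intro x
    rw [Int.fract, hg_def]
    by_cases hx : x = 0
    · simp [hx]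
    · field_simp
  have hLHS : (∫ x in (0:ℝ)..1, Int.fract (θ/x) * Real.sin (a*x))
      = ∫ x in (0:ℝ)..1, (θ * (Real.sin (a*x)/x) - g x) := by
    apply intervalIntegral.integral_congr
    intro x _
    exact hpt x
  rw [hLHS, intervalIntegral.integral_sub (h1int.const_mul θ) hgint,
    intervalIntegral.integral_const_mul]
  have hfin : (1 / a) * (a * ∫ x in (0:ℝ)..1, g x) = ∫ x in (0:ℝ)..1, g x := by
    field_simp
  rw [hfin]
end
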